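/- arXiv:2202.07629 — 4 statements merged into one kernel-verified Lean document; each statement's English description precedes it below -/
import Mathlib

section
/- For every complete NFA A over a finite alphabet Σ, the ω-language of the Büchi automaton A_f is L(A_f) = { w₁ $ w₁' $ w₂ $ w₂' $ w₃ $ w₃' $ ⋯ ∈ Σ_$^ω : for all i ≥ 1, wᵢ ∈ Σ_$^* and wᵢ' ∈ L(A) }. -/
open scoped Classical ENNReal

/-! ## ω-words -/

/-- Cons a letter onto an ω-word. -/
def wcons {L : Type*} (σ : L) (α : ℕ → L) : ℕ → L
  | 0 => σ
  | n + 1 => α n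

/-- Prepend a finite word to an ω-word. -/
def wApp {L : Type*} : List L → (ℕ → L) → (ℕ → L)
  | [], α => α
  | x :: xs, α => wcons x (wApp xs α)

/-- The length-`n` prefix of an ω-word, as a list. -/
def prefList {L : Type*} (α : ℕ → L) (n : ℕ) : List L :=
  List.ofFn (fun i : Fin n => α i)

/-- The starting position of the `i`-th block in an infinite concatenation of
finite blocks `u 0, u 1, u 2, …`. -/
def blockStart {L : Type*} (u : ℕ → List L) (i : ℕ) : ℕ :=
  ∑ j ∈ Finset.range i, (u j).length

/-- The ω-word `α` is the infinite concatenation of the finite blocks `u 0, u 1, …`. -/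
def OmegaConcatOf {L : Type*} (u : ℕ → List L) (α : ℕ → L) : Prop :=
  ∀ (i k : ℕ) (h : k < (u i).length), α (blockStart u i + k) = (u i).get ⟨k, h⟩

/-! ## Nondeterministic Büchi word automata -/

/-- A nondeterministic Büchi word automaton (NBW) with alphabet `L` and state space `Q`:
an initial state, a transition function and a set of accepting (final) states. -/
structure NBW (L : Type*) (Q : Type*) where
  init : Q
  step : Q → L → Set Q
  acc : Set Q

namespace NBW

variable {L Q : Type*}

/-- An NBW is complete if every state has a successor on every letter. -/
def Complete (N : NBW L Q) : Prop := ∀ q σ, (N.step q σ).Nonempty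

/-- `r` is a run of `N` on the ω-word `α` starting in state `q`. -/
def IsRunFrom (N : NBW L Q) (q : Q) (α : ℕ → L) (r : ℕ → Q) : Prop :=
  r 0 = q ∧ ∀ i, r (i + 1) ∈ N.step (r i) (α i)

/-- A run is accepting if some accepting state occurs infinitely often in it. -/
def Accepting (N : NBW L Q) (r : ℕ → Q) : Prop :=
  ∃ q ∈ N.acc, ∀ n, ∃ m, n ≤ m ∧ r m = q

/-- The ω-language of an NBW: the set of ω-words having an accepting run. -/
def lang (N : NBW L Q) : Set (ℕ → L) :=
  {α | ∃ r, N.IsRunFrom N.init α r ∧ N.Accepting r}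

/-- The same NBW with initial state `q` (denoted `C_q` in the paper). -/
def withInit (N : NBW L Q) (q : Q) : NBW L Q := ⟨q, N.step, N.acc⟩

end NBW

/-! ## NFAs on finite words -/

/-- A nondeterministic finite automaton with a single initial state. -/
structure NFAo (L : Type*) (Q : Type*) where
  init : Q
  step : Q → L → Set Q
  acc : Set Q

namespace NFAo

variable {L Q : Type*}

/-- An NFA is complete if every state has a successor on every letter. -/
def Complete (M : NFAo L Q) : Prop := ∀ q σ, (M.step q σ).Nonempty

/-- The set of states reachable from a set of states on a finite word. -/
def evalFrom (M : NFAo L Q) (S : Set Q) (w : List L) : Set Q :=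
  w.foldl (fun S σ => ⋃ q ∈ S, M.step q σ) S

/-- The language of an NFA: finite words having a run from the initial state ending
in an accepting state. -/
def lang (M : NFAo L Q) : Set (List L) :=
  {w | ∃ q ∈ M.evalFrom {M.init} w, q ∈ M.acc}

/-! ### The `A_f` construction
The fresh letter `$` is modelled by `none : Option L` and the fresh state `f`
by `none : Option Q`. -/

/-- Transitions of `A_f` out of an original state `q`. -/
def dollarStepAux (M : NFAo L Q) (q : Q) : Option L → Set (Option Q)
  | some σ => some '' M.step q σ
  | none => if q ∈ M.acc then {none} else {some M.init}

/-- The transition function of `A_f`: on the fresh state `f` it behaves like the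
initial state. -/
def dollarStep (M : NFAo L Q) : Option Q → Option L → Set (Option Q)
  | some q, σ => M.dollarStepAux q σ
  | none, σ => M.dollarStepAux M.init σ

/-- The Büchi automaton `A_f` obtained from the complete NFA `A` by adding the fresh
letter `$ = none` and the fresh accepting state `f = none`. -/
def dollar (M : NFAo L Q) : NBW (Option L) (Option Q) :=
  ⟨some M.init, M.dollarStep, {none}⟩

end NFAo

/-- The one-state complete NFA over `L` whose single state is both initial and
accepting; its language is all of `L*`. -/
def unitNFA (L : Type*) : NFAo L Unit := ⟨(), fun _ _ => {()}, Set.univ⟩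

/-! ## The fork construction -/

/-- The state space of `fork(A_f)`: the states of `A_f` (where `af none` is the state `f`),
the states `b0 = q₀'` and `bf = f'` of `B_f` (for the one-state universal NFA `B`),
and the three fresh states `q_F`, `q_A`, `q_B`. -/
inductive ForkState (Q : Type*) where
  | af : Option Q → ForkState Q
  | b0 : ForkState Q
  | bf : ForkState Q
  | qF : ForkState Q
  | qA : ForkState Q
  | qB : ForkState Q
  deriving DecidableEq, Fintype

/-- The transition function of `fork(A_f)`. -/
def forkStep {L Q : Type*} (M : NFAo L Q) :
    ForkState Q → Option L → Set (ForkState Q)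
  | .af q, σ => ForkState.af '' M.dollarStep q σ
  | .b0, some _ => {.b0}
  | .b0, none => {.bf}
  | .bf, some _ => {.b0}
  | .bf, none => {.bf}
  | .qF, _ => {.qA, .qB}
  | .qA, _ => {.af (some M.init)}
  | .qB, some _ => ∅
  | .qB, none => {.b0}

/-- The NBW `fork(A_f)` of the paper (for the complete NFA `A = M`). -/
def fork {L Q : Type*} (M : NFAo L Q) : NBW (Option L) (ForkState Q) :=
  ⟨.qF, forkStep M, {.af none, .bf}⟩

/-! ## Markov decision processes -/

/-- A state-labelled Markov decision process with states `S`, actions `A` and labels `L`: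
a partial probabilistic transition function and a labelling of states. -/
structure MDP (S A L : Type*) where
  prob : S → A → Option (PMF S)
  label : S → L

namespace MDP

variable {S A L : Type*}

/-- The action `a` is available (enabled) in state `s`. -/
def enabled (M : MDP S A L) (s : S) (a : A) : Prop := (M.prob s a).isSome

/-- Every state has at least one available action (assumed for all MDPs). -/
def NonBlocking (M : MDP S A L) : Prop := ∀ s, ∃ a, M.enabled s a

/-- An MDP is a Markov chain if every state has exactly one available action. -/
def IsMC (M : MDP S A L) : Prop := ∀ s, ∃! a, M.enabled s a

/-- A strategy: given a finite run (the past state-action pairs and the current state),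
a distribution over the actions available at the current state. -/
structure Strategy (M : MDP S A L) where
  act : List (S × A) → S → PMF A
  supp : ∀ h s, (∃ a, M.enabled s a) → ∀ a ∈ (act h s).support, M.enabled s a

/-- The probability that, starting from `s` with past history `hist`, the MDP controlled
by the strategy `μ` produces exactly the finite run `l` (a list of state-action pairs). -/
noncomputable def pathWeightAux (M : MDP S A L) (μ : M.Strategy) :
    List (S × A) → S → List (S × A) → ℝ≥0∞
  | _, _, [] => 1
  | hist, s, (s', a) :: rest =>
    if s' = s then
      μ.act hist s a *
        match rest with
        | [] => 1
        | (s'', _) :: _ =>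
          (match M.prob s a with
           | none => 0
           | some p => p s'') * pathWeightAux M μ (hist ++ [(s, a)]) s'' rest
    else 0

/-- `E` is a cylinder set at horizon `n`: membership only depends on the first `n`
state-action pairs of a run. -/
def IsCylinderAt {X : Type*} (E : Set (ℕ → X)) (n : ℕ) : Prop :=
  ∀ r r' : ℕ → X, prefList r n = prefList r' n → r ∈ E → r' ∈ E

/-- The probability of the horizon-`n` cylinder set `E` of runs, starting from `s₀`,
under strategy `μ`. -/
noncomputable def horizonProb [Fintype S] [Fintype A] (M : MDP S A L) (μ : M.Strategy)
    (s₀ : S) (n : ℕ) (E : Set (ℕ → S × A)) : ℝ≥0∞ :=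
  ∑ v : Fin n → S × A,
    if ∃ r ∈ E, prefList r n = List.ofFn v then pathWeightAux M μ [] s₀ (List.ofFn v)
    else 0

/-- The cylinder premeasure: defined on cylinder sets via finite-horizon probabilities
(and `∞` on non-cylinder sets). -/
noncomputable def preMeasure [Fintype S] [Fintype A] (M : MDP S A L) (μ : M.Strategy)
    (s₀ : S) (E : Set (ℕ → S × A)) : ℝ≥0∞ :=
  ⨅ (n : ℕ) (_ : IsCylinderAt E n), horizonProb M μ s₀ n E

theorem preMeasure_empty [Fintype S] [Fintype A] (M : MDP S A L) (μ : M.Strategy)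
    (s₀ : S) : preMeasure M μ s₀ ∅ = 0 := by
  refine le_antisymm ?_ zero_le
  have hcyl : IsCylinderAt (∅ : Set (ℕ → S × A)) 0 := fun r r' _ h => h.elim
  calc preMeasure M μ s₀ ∅ ≤ horizonProb M μ s₀ 0 ∅ := iInf₂_le 0 hcyl
    _ = 0 := by simp [horizonProb]

/-- The standard probability measure `Pr^μ_{s₀}` on the space of infinite runs
(as the Carathéodory outer measure extending the cylinder premeasure). -/
noncomputable def Pr [Fintype S] [Fintype A] (M : MDP S A L) (μ : M.Strategy) (s₀ : S) :
    MeasureTheory.OuterMeasure (ℕ → S × A) :=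
  MeasureTheory.OuterMeasure.ofFunction (preMeasure M μ s₀) (preMeasure_empty M μ s₀)

/-- The product MDP `M × N` of an MDP and an NBW. -/
noncomputable def prod {Q : Type*} (M : MDP S A L) (N : NBW L Q) : MDP (S × Q) (A × Q) L where
  prob := fun sq aq =>
    if aq.2 ∈ N.step sq.2 (M.label sq.1) then
      (M.prob sq.1 aq.1).map (PMF.map fun s' => (s', aq.2))
    else none
  label := fun sq => M.label sq.1

end MDP

/-- The semantic satisfaction probability `PSem_N^M(s₀)`: the optimal probability that
the label sequence of a run of `M` from `s₀` is in the language of `N`. -/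
noncomputable def PSem {S A L Q : Type*} [Fintype S] [Fintype A] (N : NBW L Q)
    (M : MDP S A L) (s₀ : S) : ℝ≥0∞ :=
  ⨆ μ : M.Strategy, MDP.Pr M μ s₀ {r | (fun n => M.label (r n).1) ∈ N.lang}

/-- The syntactic satisfaction probability `PSyn_N^M(s₀)`: the optimal probability that
a run of the product MDP `M × N` from `(s₀, q₀)` visits `F^× = S × F` infinitely often. -/
noncomputable def PSyn {S A L Q : Type*} [Fintype S] [Fintype A] [Fintype Q] (N : NBW L Q)
    (M : MDP S A L) (s₀ : S) : ℝ≥0∞ :=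
  ⨆ μ : (M.prod N).Strategy,
    MDP.Pr (M.prod N) μ (s₀, N.init) {r | ∀ n, ∃ m, n ≤ m ∧ (r m).1.2 ∈ N.acc}

namespace NBW

/-- An NBW is good-for-MDPs (GFM) if syntactic and semantic satisfaction probabilities
coincide for every finite MDP and every initial state. -/
def GFM {L Q : Type*} [Fintype Q] (N : NBW L Q) : Prop :=
  ∀ (S A : Type) [Fintype S] [Fintype A] (M : MDP S A L),
    M.NonBlocking → ∀ s₀ : S, PSyn N M s₀ = PSem N M s₀

/-- An NBW is qualitatively good-for-MDPs (QGFM) if, whenever the semantic satisfaction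
probability is 1, so is the syntactic one, for every finite MDP and initial state. -/
def QGFM {L Q : Type*} [Fintype Q] (N : NBW L Q) : Prop :=
  ∀ (S A : Type) [Fintype S] [Fintype A] (M : MDP S A L),
    M.NonBlocking → ∀ s₀ : S, PSem N M s₀ = 1 → PSyn N M s₀ = 1

end NBW

/-! ## Safety automata -/

/-- A safety automaton: an automaton in which every state is accepting, so only the
initial state and the transitions matter. -/
structure SafetyAut (L Q : Type*) where
  init : Q
  step : Q → L → Set Q

/-- The language of a safety automaton: the ω-words on which it has an infinite run. -/
def SafetyAut.lang {L Q : Type*} (T : SafetyAut L Q) : Set (ℕ → L) :=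
  {α | ∃ r : ℕ → Q, r 0 = T.init ∧ ∀ i, r (i + 1) ∈ T.step (r i) (α i)}

/-- A safety automaton is good-for-games (GFG) if its nondeterminism can be resolved
based only on the history: a strategy `g` picks, for each finite word, a current state,
following a transition on every finite word that is a prefix of a word of the language. -/
def SafetyAut.GFG {L Q : Type*} (T : SafetyAut L Q) : Prop :=
  ∃ g : List L → Q, g [] = T.init ∧
    ∀ (w : List L) (σ : L),
      (∃ α ∈ T.lang, prefList α (w.length + 1) = w ++ [σ]) →
      g (w ++ [σ]) ∈ T.step (g w) σ

namespace NBW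

variable {L Q : Type*}

/-- A state `q` of `C` is productive if `L(C_q) ≠ ∅`. -/
def Productive (C : NBW L Q) (q : Q) : Prop := (C.withInit q).lang.Nonempty

/-- A state `q` of `C` is a QGFM state if `C_q` is QGFM. -/
def QGFMState [Fintype Q] (C : NBW L Q) (q : Q) : Prop := (C.withInit q).QGFM

/-- A transition `(q, σ, r)` of `C` is residual if `L(C_r) = σ⁻¹ L(C_q)`. -/
def ResidualTrans (C : NBW L Q) (q : Q) (σ : L) (r : Q) : Prop :=
  r ∈ C.step q σ ∧ (C.withInit r).lang = {α | wcons σ α ∈ (C.withInit q).lang}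

/-- The safety automaton `S` associated with the candidate NBW `C`: its states are the
productive QGFM states of `C` and its transitions are the residual transitions of `C`
between such states. -/
def safetyS [Fintype Q] (C : NBW L Q) : SafetyAut L Q :=
  ⟨C.init, fun q σ =>
    {r | (C.Productive q ∧ C.QGFMState q) ∧ (C.Productive r ∧ C.QGFMState r) ∧
      C.ResidualTrans q σ r}⟩

/-- The safety automaton `T` associated with the candidate NBW `C`: its states are the
productive states of `C` and its transitions are all transitions of `C` between them. -/
def safetyT (C : NBW L Q) : SafetyAut L Q :=
  ⟨C.init, fun q σ => {r | C.Productive q ∧ C.Productive r ∧ r ∈ C.step q σ}⟩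

end NBW

/-!
Reading `$` from any state of `A_f` leads to `f` or to `q₀`, and these two states have the same
successors; identifying them through `Option.getD`, a `$`-free stretch is read by `A_f` exactly as
by `A` from `q₀`, and the run reaches `f` at the next `$` iff the stretch lies in `L(A)`. Hence an
accepting run exhibits infixes `$ w' $` with `w' ∈ L(A)` arbitrarily far out; choosing them one
after another and letting the `wᵢ` fill the gaps gives the decomposition. Conversely, completeness
lets a run cross each `wᵢ` arbitrarily, and it then passes through `f` at the end of every block.
-/

open Filter

def wSlice {L : Type*} (α : ℕ → L) (a n : ℕ) : List L :=
  (List.range' a n).map α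

section wSlice

variable {L : Type*}

@[simp]
theorem length_wSlice (α : ℕ → L) (a n : ℕ) : (wSlice α a n).length = n := by
  simp [wSlice]

@[simp]
theorem wSlice_zero (α : ℕ → L) (a : ℕ) : wSlice α a 0 = [] := rfl

@[simp]
theorem getElem_wSlice (α : ℕ → L) (a n k : ℕ) (hk : k < (wSlice α a n).length) :
    (wSlice α a n)[k] = α (a + k) := by
  simp [wSlice]

theorem wSlice_add (α : ℕ → L) (a m n : ℕ) :
    wSlice α a (m + n) = wSlice α a m ++ wSlice α (a + m) n := by
  simp [wSlice, ← List.range'_append_1]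

theorem wSlice_succ (α : ℕ → L) (a n : ℕ) : wSlice α a (n + 1) = wSlice α a n ++ [α (a + n)] := by
  rw [wSlice_add]; rfl

theorem wSlice_succ' (α : ℕ → L) (a n : ℕ) : wSlice α a (n + 1) = α a :: wSlice α (a + 1) n := by
  simp [wSlice, List.range'_succ]

theorem blockStart_succ (u : ℕ → List L) (i : ℕ) :
    blockStart u (i + 1) = blockStart u i + (u i).length :=
  Finset.sum_range_succ _ _

theorem omegaConcatOf_iff {u : ℕ → List L} {α : ℕ → L} :
    OmegaConcatOf u α ↔ ∀ i, wSlice α (blockStart u i) (u i).length = u i := by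
  simp [OmegaConcatOf, List.ext_getElem_iff, eq_comm]

theorem omegaConcatOf_wSlice (α : ℕ → L) {s : ℕ → ℕ} (hs0 : s 0 = 0) (hs : Monotone s) :
    OmegaConcatOf (fun i => wSlice α (s i) (s (i + 1) - s i)) α := by
  have hstart : ∀ i, blockStart (fun i => wSlice α (s i) (s (i + 1) - s i)) i = s i := by
    intro i
    induction i with
    | zero => simp [blockStart, hs0]
    | succ i ih =>
      rw [blockStart_succ, ih, length_wSlice]
      have := hs (Nat.le_add_right i 1)
      omega
  exact omegaConcatOf_iff.2 fun i => by simp only [hstart, length_wSlice]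

theorem exists_last_none {α : ℕ → Option L} {a e : ℕ} (ha : α a = none) (hae : a < e) :
    ∃ p, a ≤ p ∧ p < e ∧ α p = none ∧
      ∃ w : List L, wSlice α (p + 1) (e - (p + 1)) = w.map some := by
  induction e, hae using Nat.le_induction with
  | base => exact ⟨a, le_rfl, by omega, ha, [], by simp⟩
  | succ e hae ih =>
    obtain ⟨p, hap, hpe, hp, w, hw⟩ := ih
    cases he : α e with
    | none => exact ⟨e, by omega, by omega, he, [], by simp⟩
    | some σ =>
      refine ⟨p, hap, by omega, hp, w ++ [σ], ?_⟩
      rw [show e + 1 - (p + 1) = e - (p + 1) + 1 by omega, wSlice_succ, hw,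
        show p + 1 + (e - (p + 1)) = e by omega, he, List.map_append, List.map_singleton]

end wSlice

theorem StrictMono.existsUnique_le_lt_succ {s : ℕ → ℕ} (hs : StrictMono s) (hs0 : s 0 = 0)
    (n : ℕ) : ∃! i, s i ≤ n ∧ n < s (i + 1) := by
  have hex : ∃ i, n < s (i + 1) := ⟨n, (hs.id_le (n + 1)).trans_lt' n.lt_succ_self⟩
  refine ⟨Nat.find hex, ⟨?_, Nat.find_spec hex⟩, fun j ⟨hj, hj'⟩ => ?_⟩
  · rcases Nat.eq_zero_or_eq_succ_pred (Nat.find hex) with h | h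
    · rw [h, hs0]; exact n.zero_le
    · rw [h]
      exact not_lt.1 (Nat.find_min hex (Nat.pred_lt_self (by omega)))
  · refine le_antisymm ?_ (Nat.find_min' hex hj')
    by_contra! h
    have hle : s (Nat.find hex + 1) ≤ s j := hs.monotone h
    exact (Nat.find_spec hex).not_ge (hle.trans hj)

namespace NBW

variable {L Q : Type*} (N : NBW L Q)

def toNFA : NFA L Q := ⟨N.step, {N.init}, N.acc⟩

@[simp]
theorem toNFA_step : N.toNFA.step = N.step := rfl

variable {N}

theorem mem_evalFrom_wSlice_iff {q x : Q} {α : ℕ → L} {a n : ℕ} :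
    x ∈ N.toNFA.evalFrom {q} (wSlice α a n) ↔
      ∃ ρ : ℕ → Q, ρ 0 = q ∧ ρ n = x ∧ ∀ k < n, ρ (k + 1) ∈ N.step (ρ k) (α (a + k)) := by
  induction n generalizing x with
  | zero =>
    refine ⟨fun hx => ⟨fun _ => q, rfl, (Set.mem_singleton_iff.1 hx).symm, by simp⟩, ?_⟩
    rintro ⟨ρ, h0, hx, -⟩
    exact Set.mem_singleton_iff.2 (hx ▸ h0)
  | succ n ih =>
    rw [wSlice_succ, NFA.evalFrom_append, NFA.evalFrom_singleton, NFA.mem_stepSet]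
    constructor
    · rintro ⟨y, hy, hxy⟩
      obtain ⟨ρ, h0, hn, hstep⟩ := ih.1 hy
      refine ⟨fun k => if k ≤ n then ρ k else x, by simpa using h0, by simp, fun k hk => ?_⟩
      rcases Nat.lt_or_eq_of_le (Nat.le_of_lt_succ hk) with hk | rfl
      · simpa [hk.le, Nat.succ_le_of_lt hk] using hstep k hk
      · simpa [hn] using hxy
    · rintro ⟨ρ, h0, hx, hstep⟩
      exact ⟨ρ n, ih.2 ⟨ρ, h0, rfl, fun k hk => hstep k (by omega)⟩, hx ▸ hstep n n.lt_succ_self⟩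

theorem IsRunFrom.mem_evalFrom_wSlice {q : Q} {α : ℕ → L} {r : ℕ → Q} (hr : N.IsRunFrom q α r)
    (a n : ℕ) : r (a + n) ∈ N.toNFA.evalFrom {r a} (wSlice α a n) :=
  mem_evalFrom_wSlice_iff.2 ⟨fun k => r (a + k), rfl, rfl, fun k _ => hr.2 (a + k)⟩

theorem exists_isRunFrom_of_mem_evalFrom {α : ℕ → L} {s : ℕ → ℕ} (hs : StrictMono s)
    (hs0 : s 0 = 0) {q : ℕ → Q}
    (hq : ∀ i, q (i + 1) ∈ N.toNFA.evalFrom {q i} (wSlice α (s i) (s (i + 1) - s i))) :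
    ∃ r, N.IsRunFrom (q 0) α r ∧ ∀ i, r (s i) = q i := by
  choose ρ hρ0 hρlast hρstep using fun i => mem_evalFrom_wSlice_iff.1 (hq i)
  choose idx hidx hidx_unique using hs.existsUnique_le_lt_succ hs0
  have hidx_eq : ∀ {n i}, s i ≤ n → n < s (i + 1) → idx n = i :=
    fun h h' => (hidx_unique _ _ ⟨h, h'⟩).symm
  have hblock : ∀ i, idx (s i) = i := fun i => hidx_eq le_rfl (hs i.lt_succ_self)
  set r : ℕ → Q := fun n => ρ (idx n) (n - s (idx n))
  have hrs : ∀ i, r (s i) = q i := fun i => by simp only [r, hblock, Nat.sub_self, hρ0]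
  refine ⟨r, ⟨by simpa [hs0] using hrs 0, fun n => ?_⟩, hrs⟩
  obtain ⟨hlo, hhi⟩ := hidx n
  set i := idx n
  have hnext : r (n + 1) = ρ i (n - s i + 1) := by
    rcases Nat.lt_or_eq_of_le (Nat.succ_le_of_lt hhi) with h | h
    · simp only [r, hidx_eq (by omega : s i ≤ n + 1) h]
      congr 1
      omega
    · rw [show n + 1 = s (i + 1) from h, hrs, ← hρlast i]
      congr 1
      omega
  rw [hnext]
  simpa [show s i + (n - s i) = n by omega] using hρstep i (n - s i) (by omega)

theorem Complete.evalFrom_nonempty (hN : N.Complete) (x : Q) (w : List L) :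
    (N.toNFA.evalFrom {x} w).Nonempty := by
  induction w generalizing x with
  | nil => exact Set.singleton_nonempty x
  | cons a w ih =>
    obtain ⟨y, hy⟩ := hN x a
    obtain ⟨z, hz⟩ := ih y
    rw [NFA.evalFrom_cons, NFA.stepSet_singleton]
    exact ⟨z, NFA.mem_evalFrom_iff_exists.2 ⟨y, hy, hz⟩⟩

end NBW

namespace NFAo

variable {L Q : Type*} (M : NFAo L Q)

def toNFA : NFA L Q := ⟨M.step, {M.init}, M.acc⟩

theorem mem_lang_iff {w : List L} : w ∈ M.lang ↔ ∃ q ∈ M.toNFA.evalFrom {M.init} w, q ∈ M.acc :=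
  Iff.rfl

@[simp]
theorem toNFA_step : M.toNFA.step = M.step := rfl

@[simp]
theorem dollar_step : M.dollar.step = M.dollarStep := rfl

theorem dollarStep_some (x : Option Q) (σ : L) :
    M.dollarStep x (some σ) = some '' M.step (x.getD M.init) σ := by
  cases x <;> rfl

theorem dollarStep_none (x : Option Q) :
    M.dollarStep x none = {if x.getD M.init ∈ M.acc then none else some M.init} := by
  cases x <;> simp only [dollarStep, dollarStepAux, Option.getD] <;> split_ifs <;> rfl

theorem none_mem_dollarStep_iff {x : Option Q} {σ : Option L} :
    none ∈ M.dollarStep x σ ↔ σ = none ∧ x.getD M.init ∈ M.acc := by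
  cases σ with
  | some σ => simp [dollarStep_some]
  | none => simp [dollarStep_none]

theorem image_getD_evalFrom_map_some (x : Option Q) (w : List L) :
    (·.getD M.init) '' M.dollar.toNFA.evalFrom {x} (w.map some) =
      M.toNFA.evalFrom {x.getD M.init} w := by
  induction w generalizing x with
  | nil => simp
  | cons σ w ih =>
    rw [List.map_cons, NFA.evalFrom_cons, NFA.evalFrom_cons, NFA.stepSet_singleton,
      NFA.stepSet_singleton, NFA.evalFrom_eq_biUnion_singleton,
      NFA.evalFrom_eq_biUnion_singleton M.toNFA]
    simp [Set.image_iUnion₂, ih, dollarStep_some]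

theorem none_mem_evalFrom_dollar_iff (x : Option Q) (w : List L) :
    none ∈ M.dollar.toNFA.evalFrom {x} (none :: w.map some ++ [none]) ↔ w ∈ M.lang := by
  obtain ⟨y, hy, hyinit⟩ : ∃ y, M.dollarStep x none = {y} ∧ y.getD M.init = M.init :=
    ⟨_, M.dollarStep_none x, by split_ifs <;> rfl⟩
  rw [NFA.evalFrom_append, NFA.evalFrom_singleton, NFA.mem_stepSet, NFA.evalFrom_cons,
    NFA.stepSet_singleton, NBW.toNFA_step, dollar_step, hy, mem_lang_iff, ← hyinit,
    ← image_getD_evalFrom_map_some, Set.exists_mem_image]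
  simp only [none_mem_dollarStep_iff, true_and]

def DollarWordAt (α : ℕ → Option L) (p : ℕ) : Prop :=
  ∃ w ∈ M.lang, wSlice α p (w.length + 2) = none :: w.map some ++ [none]

variable {M}

theorem Complete.dollar (hM : M.Complete) : M.dollar.Complete := by
  rintro x (_ | σ)
  · simp [dollarStep_none]
  · simpa [dollarStep_some] using hM _ σ

theorem none_mem_evalFrom_block (hM : M.Complete) (x : Option Q)
    (v : List (Option L)) {w : List L} (hw : w ∈ M.lang) :
    none ∈ M.dollar.toNFA.evalFrom {x} (v ++ [none] ++ w.map some ++ [none]) := by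
  obtain ⟨y, hy⟩ := hM.dollar.evalFrom_nonempty x v
  rw [List.append_assoc, List.append_assoc, List.singleton_append, ← List.cons_append,
    NFA.evalFrom_append]
  exact NFA.mem_evalFrom_iff_exists.2 ⟨y, hy, (M.none_mem_evalFrom_dollar_iff y w).2 hw⟩

theorem frequently_dollarWordAt_of_mem_lang {α : ℕ → Option L} (h : α ∈ M.dollar.lang) :
    ∃ᶠ p in atTop, M.DollarWordAt α p := by
  obtain ⟨r, hr, _, rfl, hinf⟩ := h
  have hdollar : ∀ n, r (n + 1) = none → α n = none :=
    fun n hn => ((M.none_mem_dollarStep_iff).1 (hn ▸ hr.2 n)).1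
  refine frequently_atTop.2 fun n => ?_
  obtain ⟨a, hna, ha⟩ := hinf (n + 1)
  obtain ⟨e, hae, he⟩ := hinf (a + 1)
  obtain ⟨a, rfl⟩ : ∃ a', a = a' + 1 := ⟨a - 1, by omega⟩
  obtain ⟨e, rfl⟩ : ∃ e', e = e' + 1 := ⟨e - 1, by omega⟩
  obtain ⟨p, hap, hpe, hp, w, hw⟩ := exists_last_none (hdollar a ha) (show a < e by omega)
  have hlen : w.length = e - (p + 1) := by simpa using (congrArg List.length hw).symm
  have hslice : wSlice α p (w.length + 2) = none :: w.map some ++ [none] := by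
    rw [wSlice_succ, wSlice_succ', hp, hlen, hw, show p + (e - (p + 1) + 1) = e by omega,
      hdollar e he]
  refine ⟨p, by omega, w, ?_, hslice⟩
  rw [← M.none_mem_evalFrom_dollar_iff (r p), ← hslice, ← he]
  simpa [show p + (w.length + 2) = e + 1 by omega] using hr.mem_evalFrom_wSlice p (w.length + 2)

theorem exists_omegaConcatOf_of_frequently_dollarWordAt {α : ℕ → Option L}
    (h : ∃ᶠ p in atTop, M.DollarWordAt α p) :
    ∃ (w : ℕ → List (Option L)) (w' : ℕ → List L), (∀ i, w' i ∈ M.lang) ∧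
      OmegaConcatOf (fun i => w i ++ [none] ++ (w' i).map some ++ [none]) α := by
  choose P hP W hW hslice using frequently_atTop.1 h
  -- block `i` runs from `s i` to the end of the chosen infix `$ W (s i) $` at `P (s i) ≥ s i`
  let s : ℕ → ℕ := fun i => Nat.rec 0 (fun _ t => P t + (W t).length + 2) i
  have hs : ∀ i, s (i + 1) = s i + ((P (s i) - s i) + ((W (s i)).length + 2)) :=
    fun i => by have := hP (s i); show P (s i) + (W (s i)).length + 2 = _; omega
  refine ⟨fun i => wSlice α (s i) (P (s i) - s i), fun i => W (s i), fun i => hW _, ?_⟩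
  have hmono : Monotone s := monotone_nat_of_le_succ fun i => by rw [hs i]; omega
  convert omegaConcatOf_wSlice α rfl hmono using 2 with i
  rw [hs, Nat.add_sub_cancel_left, wSlice_add, Nat.add_sub_cancel' (hP _), hslice]
  simp

theorem mem_dollar_lang_of_omegaConcatOf (hM : M.Complete) {α : ℕ → Option L}
    {w : ℕ → List (Option L)} {w' : ℕ → List L} (hw' : ∀ i, w' i ∈ M.lang)
    (hα : OmegaConcatOf (fun i => w i ++ [none] ++ (w' i).map some ++ [none]) α) :
    α ∈ M.dollar.lang := by
  set u : ℕ → List (Option L) := fun i => w i ++ [none] ++ (w' i).map some ++ [none]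
  have hs : StrictMono (blockStart u) :=
    strictMono_nat_of_lt_succ fun i => by simp [blockStart_succ, u]
  let q : ℕ → Option Q := fun | 0 => some M.init | _ + 1 => none
  obtain ⟨r, hr, hrs⟩ := M.dollar.exists_isRunFrom_of_mem_evalFrom (α := α) hs
    (by simp [blockStart]) (q := q) fun i => by
      rw [blockStart_succ, Nat.add_sub_cancel_left, omegaConcatOf_iff.1 hα i]
      exact none_mem_evalFrom_block hM (q i) (w i) (hw' i)
  exact ⟨r, hr, none, rfl, fun n => ⟨blockStart u (n + 1), (hs.id_le _).trans' n.le_succ,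
    hrs (n + 1)⟩⟩

end NFAo

theorem dollar_lang_general {Γ Q : Type}
    (A : NFAo Γ Q) (hA : A.Complete) :
    A.dollar.lang =
      {α : ℕ → Option Γ |
        ∃ (w : ℕ → List (Option Γ)) (w' : ℕ → List Γ),
          (∀ i, w' i ∈ A.lang) ∧
          OmegaConcatOf (fun i => w i ++ [none] ++ (w' i).map some ++ [none]) α} := by
  ext α
  exact ⟨fun h => NFAo.exists_omegaConcatOf_of_frequently_dollarWordAt
      (NFAo.frequently_dollarWordAt_of_mem_lang h),
    fun ⟨_, _, hw', hα⟩ => NFAo.mem_dollar_lang_of_omegaConcatOf hA hw' hα⟩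

/-- For every complete NFA `A` over a finite alphabet `Σ`, the ω-language
of the Büchi automaton `A_f` consists exactly of the infinite concatenations
`w₁ $ w₁' $ w₂ $ w₂' $ ⋯` with `wᵢ ∈ Σ_$^*` and `wᵢ' ∈ L(A)`. -/
theorem dollar_lang {Γ Q : Type} [Fintype Γ] [Fintype Q]
    (A : NFAo Γ Q) (hA : A.Complete) :
    A.dollar.lang =
      {α : ℕ → Option Γ |
        ∃ (w : ℕ → List (Option Γ)) (w' : ℕ → List Γ),
          (∀ i, w' i ∈ A.lang) ∧
          OmegaConcatOf (fun i => w i ++ [none] ++ (w' i).map some ++ [none]) α} :=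
  dollar_lang_general A hA
end

section
/- Given two complete NFAs A and B over the same finite alphabet Σ, L(B) ⊆ L(A) if, and only if, L(B_f) ⊆ L(A_f). -/
open scoped Classical ENNReal

/-! Since `f` behaves like `q₀`, a run of `A_f` is a run of `A` restarted after every `$`, and
it visits `f` exactly after a `$` closing a block of letters that the run accepts. Blocks are
processed independently: if `L(B) ⊆ L(A)` and a run of `B_f` accepts infinitely many blocks of an
ω-word, then `A_f` can accept the same blocks, running through the others by completeness of `A`.
Conversely, `(w$)^ω` is accepted by `C_f` iff `w ∈ L(C)`. -/

section OmegaWords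

variable {L : Type*}

def currentBlock (α : ℕ → Option L) : ℕ → List L
  | 0 => []
  | k + 1 => match α k with
    | none => []
    | some σ => currentBlock α k ++ [σ]

lemma currentBlock_succ_of_eq_none {α : ℕ → Option L} {k : ℕ} (h : α k = none) :
    currentBlock α (k + 1) = [] := by
  simp [currentBlock, h]

lemma currentBlock_succ_of_eq_some {α : ℕ → Option L} {k : ℕ} {σ : L} (h : α k = some σ) :
    currentBlock α (k + 1) = currentBlock α k ++ [σ] := by
  simp [currentBlock, h]

lemma currentBlock_prefix {α : ℕ → Option L} {k m : ℕ} (hkm : k ≤ m)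
    (hfree : ∀ j, k ≤ j → j < m → α j ≠ none) : currentBlock α k <+: currentBlock α m := by
  induction m, hkm using Nat.le_induction with
  | base => exact List.prefix_refl _
  | succ m hkm ih =>
    obtain ⟨σ, hσ⟩ := Option.ne_none_iff_exists'.1 (hfree m hkm (Nat.lt_succ_self m))
    rw [currentBlock_succ_of_eq_some hσ]
    exact (ih fun j hj hjm => hfree j hj (Nat.lt_succ_of_lt hjm)).trans (List.prefix_append _ _)

/-- The ω-word `(w$)^ω`. -/
def cycleWord (w : List L) (k : ℕ) : Option L := w[k % (w.length + 1)]?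

lemma cycleWord_eq_none_iff {w : List L} {k : ℕ} :
    cycleWord w k = none ↔ k % (w.length + 1) = w.length := by
  have : k % (w.length + 1) < w.length + 1 := Nat.mod_lt _ (Nat.succ_pos _)
  rw [cycleWord, List.getElem?_eq_none_iff]
  omega

lemma exists_le_cycleWord_eq_none (w : List L) (n : ℕ) :
    ∃ m, n ≤ m ∧ cycleWord w m = none := by
  refine ⟨n * (w.length + 1) + w.length, by nlinarith, cycleWord_eq_none_iff.2 ?_⟩
  rw [Nat.mul_add_mod_self_right]
  exact Nat.mod_eq_of_lt w.length.lt_succ_self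

lemma currentBlock_cycleWord (w : List L) (k : ℕ) :
    currentBlock (cycleWord w) k = w.take (k % (w.length + 1)) := by
  induction k with
  | zero => simp [currentBlock]
  | succ k ih =>
    have hlt : k % (w.length + 1) < w.length + 1 := Nat.mod_lt _ (Nat.succ_pos _)
    rcases Nat.lt_or_ge (k % (w.length + 1)) w.length with hk | hk
    · have hmod : (k + 1) % (w.length + 1) = k % (w.length + 1) + 1 := by
        rw [Nat.add_mod, Nat.mod_eq_of_lt (show 1 < w.length + 1 by omega),
          Nat.mod_eq_of_lt (by omega)]
      rw [currentBlock_succ_of_eq_some (α := cycleWord w) (List.getElem?_eq_getElem hk), ih,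
        hmod, List.take_concat_get']
    · have hmod : (k + 1) % (w.length + 1) = 0 := by
        rw [Nat.add_mod, show k % (w.length + 1) = w.length by omega, Nat.add_mod_mod,
          Nat.mod_self]
      rw [currentBlock_succ_of_eq_none (cycleWord_eq_none_iff.2 (by omega)), hmod,
        List.take_zero]

lemma currentBlock_cycleWord_of_eq_none {w : List L} {k : ℕ} (hk : cycleWord w k = none) :
    currentBlock (cycleWord w) k = w := by
  rw [currentBlock_cycleWord, cycleWord_eq_none_iff.1 hk, List.take_length]

end OmegaWords

namespace NFAo

variable {L Q Q₁ Q₂ : Type*}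

def IsRunOn (M : NFAo L Q) (w : List L) (q : ℕ → Q) : Prop :=
  q 0 = M.init ∧ ∀ i (h : i < w.length), q (i + 1) ∈ M.step (q i) w[i]

lemma evalFrom_append_singleton (M : NFAo L Q) (S : Set Q) (w : List L) (σ : L) :
    M.evalFrom S (w ++ [σ]) = ⋃ q ∈ M.evalFrom S w, M.step q σ := by
  simp only [evalFrom, List.foldl_append, List.foldl_cons, List.foldl_nil]

lemma evalFrom_nonempty (M : NFAo L Q) (hM : M.Complete) (w : List L) :
    (M.evalFrom {M.init} w).Nonempty := by
  induction w using List.reverseRecOn with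
  | nil => exact Set.singleton_nonempty _
  | append_singleton w σ ih =>
    obtain ⟨q, hq⟩ := ih
    obtain ⟨q', hq'⟩ := hM q σ
    rw [evalFrom_append_singleton]
    exact ⟨q', Set.mem_biUnion hq hq'⟩

lemma exists_isRunOn_of_mem_evalFrom (M : NFAo L Q) {w : List L} {x : Q}
    (hx : x ∈ M.evalFrom {M.init} w) : ∃ q, M.IsRunOn w q ∧ q w.length = x := by
  induction w using List.reverseRecOn generalizing x with
  | nil => exact ⟨fun _ => x, ⟨hx, fun i h => absurd h (Nat.not_lt_zero i)⟩, rfl⟩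
  | append_singleton w σ ih =>
    rw [evalFrom_append_singleton, Set.mem_iUnion₂] at hx
    obtain ⟨y, hy, hxy⟩ := hx
    obtain ⟨q, ⟨hq0, hstep⟩, rfl⟩ := ih hy
    refine ⟨Function.update q (w.length + 1) x, ⟨by simpa using hq0, fun i hi => ?_⟩, by simp⟩
    simp only [List.length_append, List.length_singleton] at hi
    rcases Nat.lt_or_eq_of_le (Nat.le_of_lt_succ hi) with hi | rfl
    · simpa [Function.update_of_ne (show i + 1 ≠ w.length + 1 by omega),
        Function.update_of_ne (show i ≠ w.length + 1 by omega), List.getElem_append_left hi]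
        using hstep i hi
    · simpa using hxy

lemma exists_isRunOn (M : NFAo L Q) (hM : M.Complete) (w : List L) : ∃ q, M.IsRunOn w q :=
  let ⟨_, hx⟩ := M.evalFrom_nonempty hM w
  (M.exists_isRunOn_of_mem_evalFrom hx).imp fun _ => And.left

lemma exists_isRunOn_of_mem_lang (M : NFAo L Q) {w : List L} (hw : w ∈ M.lang) :
    ∃ q, M.IsRunOn w q ∧ q w.length ∈ M.acc :=
  let ⟨_, hx, hacc⟩ := hw
  (M.exists_isRunOn_of_mem_evalFrom hx).imp fun _ ⟨hq, hqx⟩ => ⟨hq, hqx ▸ hacc⟩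

/-- The runs of `M.dollar` read through `Option.getD · M.init`: the state `f` behaves like the
initial state, so `$` resets `M`. -/
def IsResetRun (M : NFAo L Q) (α : ℕ → Option L) (q : ℕ → Q) : Prop :=
  q 0 = M.init ∧ (∀ k σ, α k = some σ → q (k + 1) ∈ M.step (q k) σ) ∧
    ∀ k, α k = none → q (k + 1) = M.init

lemma IsResetRun.mem_evalFrom_currentBlock {M : NFAo L Q} {α : ℕ → Option L} {q : ℕ → Q}
    (hq : M.IsResetRun α q) (k : ℕ) : q k ∈ M.evalFrom {M.init} (currentBlock α k) := by
  induction k with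
  | zero => exact hq.1
  | succ k ih =>
    rcases hα : α k with _ | σ
    · rw [currentBlock_succ_of_eq_none hα]
      exact hq.2.2 k hα
    · rw [currentBlock_succ_of_eq_some hα, evalFrom_append_singleton]
      exact Set.mem_biUnion ih (hq.2.1 k σ hα)

lemma IsResetRun.currentBlock_mem_lang {M : NFAo L Q} {α : ℕ → Option L} {q : ℕ → Q}
    (hq : M.IsResetRun α q) {k : ℕ} (hk : q k ∈ M.acc) : currentBlock α k ∈ M.lang :=
  ⟨q k, hq.mem_evalFrom_currentBlock k, hk⟩

lemma dollarStep_eq (M : NFAo L Q) (s : Option Q) (σ : Option L) :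
    M.dollarStep s σ = M.dollarStepAux (s.getD M.init) σ := by
  cases s <;> rfl

lemma exists_isResetRun_of_mem_dollar_lang (M : NFAo L Q) {α : ℕ → Option L}
    (hα : α ∈ M.dollar.lang) :
    ∃ q, M.IsResetRun α q ∧ ∀ n, ∃ k, n ≤ k ∧ α k = none ∧ q k ∈ M.acc := by
  obtain ⟨r, ⟨hr0, hr⟩, _, rfl, hinf⟩ := hα
  have hstep : ∀ k, r (k + 1) ∈ M.dollarStepAux ((r k).getD M.init) (α k) := fun k =>
    M.dollarStep_eq _ _ ▸ hr k
  refine ⟨fun k => (r k).getD M.init, ⟨by simp [hr0, dollar], fun k σ hσ => ?_, fun k hσ => ?_⟩,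
    fun n => ?_⟩
  · have := hstep k
    rw [hσ] at this
    obtain ⟨q', hq', he⟩ := this
    simpa [← he] using hq'
  · have := hstep k
    rw [hσ] at this
    simp only [dollarStepAux] at this
    split_ifs at this <;> simp_all
  · obtain ⟨_ | k, hk, hrk⟩ := hinf (n + 1)
    · omega
    have := hstep k
    rw [hrk] at this
    rcases hσ : α k with _ | σ <;> simp only [hσ, dollarStepAux] at this
    · split_ifs at this with hacc
      · exact ⟨k, by omega, hσ, hacc⟩
      · simp at this
    · simp at this

lemma IsResetRun.mem_dollar_lang {M : NFAo L Q} {α : ℕ → Option L} {q : ℕ → Q}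
    (hq : M.IsResetRun α q) (hinf : ∀ n, ∃ k, n ≤ k ∧ α k = none ∧ q k ∈ M.acc) :
    α ∈ M.dollar.lang := by
  obtain ⟨hq0, hqs, hqn⟩ := hq
  let r : ℕ → Option Q
    | 0 => some M.init
    | k + 1 => if α k = none ∧ q k ∈ M.acc then none else some (q (k + 1))
  have hr : ∀ k, (r k).getD M.init = q k := by
    rintro (_ | k)
    · exact hq0.symm
    · dsimp only [r]
      split_ifs with h
      · exact (hqn k h.1).symm
      · rfl
  refine ⟨r, ⟨rfl, fun k => ?_⟩, none, rfl, fun n => ?_⟩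
  · change r (k + 1) ∈ M.dollarStep (r k) (α k)
    rw [dollarStep_eq, hr]
    rcases hα : α k with _ | σ
    · simp only [dollarStepAux, r, hα, true_and]
      split_ifs with hacc
      · rfl
      · rw [hqn k hα]
        rfl
    · simp [dollarStepAux, r, hα, hqs k σ hα]
  · obtain ⟨k, hk, hα, hacc⟩ := hinf n
    exact ⟨k + 1, by omega, if_pos ⟨hα, hacc⟩⟩

lemma exists_isResetRun_accepting (M : NFAo L Q) {α : ℕ → Option L}
    (hinf : ∀ n, ∃ m, n ≤ m ∧ α m = none)
    (hrun : ∀ m, α m = none → ∃ q, M.IsRunOn (currentBlock α m) q) :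
    ∃ q, M.IsResetRun α q ∧ ∀ m, α m = none → currentBlock α m ∈ M.lang → q m ∈ M.acc := by
  have hρ : ∀ m, ∃ ρ : ℕ → Q, α m = none → M.IsRunOn (currentBlock α m) ρ ∧
      (currentBlock α m ∈ M.lang → ρ (currentBlock α m).length ∈ M.acc) := by
    intro m
    by_cases hm : α m = none
    · by_cases hw : currentBlock α m ∈ M.lang
      · obtain ⟨ρ, hρ, hacc⟩ := M.exists_isRunOn_of_mem_lang hw
        exact ⟨ρ, fun _ => ⟨hρ, fun _ => hacc⟩⟩
      · obtain ⟨ρ, hρ⟩ := hrun m hm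
        exact ⟨ρ, fun _ => ⟨hρ, fun h => absurd h hw⟩⟩
    · exact ⟨fun _ => M.init, fun h => absurd h hm⟩
  choose ρ hρ using hρ
  -- position `k` is read by the run `ρ (next k)` of the block closed by the next `$`
  let next k := Nat.find (hinf k)
  have le_next k : k ≤ next k := (Nat.find_spec (hinf k)).1
  have next_eq_none k : α (next k) = none := (Nat.find_spec (hinf k)).2
  have ne_none_before_next k j (hj : k ≤ j) (hjn : j < next k) : α j ≠ none :=
    fun h => Nat.find_min (hinf k) hjn ⟨hj, h⟩
  have next_eq_self k (hk : α k = none) : next k = k :=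
    le_antisymm (Nat.find_min' _ ⟨le_rfl, hk⟩) (le_next k)
  refine ⟨fun k => ρ (next k) (currentBlock α k).length, ⟨?_, fun k σ hσ => ?_, fun k hk => ?_⟩,
    fun m hm hw => ?_⟩
  · exact (hρ _ (next_eq_none 0)).1.1
  · have hk : k < next k := (le_next k).lt_of_ne fun h =>
      Option.some_ne_none σ (hσ ▸ h ▸ next_eq_none k)
    have hnext : next (k + 1) = next k :=
      le_antisymm (Nat.find_min' _ ⟨hk, next_eq_none k⟩)
        (Nat.find_min' _ ⟨(le_next (k + 1)).trans' k.le_succ, next_eq_none (k + 1)⟩)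
    have hpre : currentBlock α k ++ [σ] <+: currentBlock α (next k) :=
      currentBlock_succ_of_eq_some hσ ▸
        currentBlock_prefix hk fun j hj => ne_none_before_next k j (k.le_succ.trans hj)
    have hi : (currentBlock α k).length < (currentBlock α (next k)).length := by
      simpa using hpre.length_le
    have hget := hpre.getElem (i := (currentBlock α k).length) (by simp)
    simp only [List.getElem_concat_length] at hget
    simpa [currentBlock_succ_of_eq_some hσ, hnext, ← hget] using
      (hρ _ (next_eq_none k)).1.2 _ hi
  · simpa [currentBlock_succ_of_eq_none hk] using (hρ _ (next_eq_none (k + 1))).1.1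
  · simpa [next_eq_self m hm] using (hρ m hm).2 hw

lemma cycleWord_mem_dollar_lang_iff (M : NFAo L Q) (w : List L) :
    cycleWord w ∈ M.dollar.lang ↔ w ∈ M.lang := by
  constructor
  · intro hw
    obtain ⟨q, hq, hacc⟩ := M.exists_isResetRun_of_mem_dollar_lang hw
    obtain ⟨k, -, hk, hqk⟩ := hacc 0
    exact currentBlock_cycleWord_of_eq_none hk ▸ hq.currentBlock_mem_lang hqk
  · intro hw
    obtain ⟨q, hq, hacc⟩ := M.exists_isResetRun_accepting (exists_le_cycleWord_eq_none w)
      fun m hm => (M.exists_isRunOn_of_mem_lang (by rwa [currentBlock_cycleWord_of_eq_none hm])).imp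
        fun _ => And.left
    refine hq.mem_dollar_lang fun n => ?_
    obtain ⟨m, hnm, hm⟩ := exists_le_cycleWord_eq_none w n
    exact ⟨m, hnm, hm, hacc m hm (by rwa [currentBlock_cycleWord_of_eq_none hm])⟩

lemma dollar_lang_subset_of_lang_subset {A : NFAo L Q₁} {B : NFAo L Q₂} (hA : A.Complete)
    (h : B.lang ⊆ A.lang) : B.dollar.lang ⊆ A.dollar.lang := by
  intro α hα
  obtain ⟨qB, hqB, hinf⟩ := B.exists_isResetRun_of_mem_dollar_lang hα
  obtain ⟨qA, hqA, hacc⟩ := A.exists_isResetRun_accepting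
    (fun n => (hinf n).imp fun _ hk => ⟨hk.1, hk.2.1⟩) fun _ _ => A.exists_isRunOn hA _
  refine hqA.mem_dollar_lang fun n => ?_
  obtain ⟨k, hnk, hk, hqBk⟩ := hinf n
  exact ⟨k, hnk, hk, hacc k hk (h (hqB.currentBlock_mem_lang hqBk))⟩

end NFAo

theorem dollar_lang_subset_iff_general {Γ Q₁ Q₂ : Type}
    (A : NFAo Γ Q₁) (B : NFAo Γ Q₂) (hA : A.Complete) :
    B.lang ⊆ A.lang ↔ B.dollar.lang ⊆ A.dollar.lang :=
  ⟨NFAo.dollar_lang_subset_of_lang_subset hA, fun h w hw =>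
    (A.cycleWord_mem_dollar_lang_iff w).1 (h ((B.cycleWord_mem_dollar_lang_iff w).2 hw))⟩

/-- For complete NFAs `A`, `B` over the same finite alphabet,
`L(B) ⊆ L(A)` iff `L(B_f) ⊆ L(A_f)`. -/
theorem dollar_lang_subset_iff {Γ Q₁ Q₂ : Type} [Fintype Γ] [Fintype Q₁] [Fintype Q₂]
    (A : NFAo Γ Q₁) (B : NFAo Γ Q₂) (hA : A.Complete) (hB : B.Complete) :
    B.lang ⊆ A.lang ↔ B.dollar.lang ⊆ A.dollar.lang :=
  dollar_lang_subset_iff_general A B hA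
end

section
/- For every complete NFA A over Σ, the ω-language of the Büchi automaton fork(A_f) is L(fork(A_f)) = { σ σ' w : σ, σ' ∈ Σ_$, w ∈ L(A_f) } ∪ { σ $ w : σ ∈ Σ_$, w ∈ L(B_f) }. -/
open scoped Classical ENNReal

/-!
A run of `fork(A_f)` spends its first two letters going from `q_F` to `q_A` or `q_B`, and
then to the initial state of `A_f` (on any letter) or of `B_f` (only on `$`). From there
on it never leaves that copy of `A_f` or `B_f`, and the accepting states of `fork(A_f)`
inside each copy are exactly those of the copied automaton.
-/

theorem wcons_zero_succ {L : Type*} (β : ℕ → L) : wcons (β 0) (fun n => β (n + 1)) = β := by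
  funext n
  cases n <;> rfl

theorem wcons_inj {L : Type*} {a b : L} {α γ : ℕ → L} :
    wcons a α = wcons b γ ↔ a = b ∧ α = γ := by
  refine ⟨fun h => ⟨congrFun h 0, funext fun n => congrFun h (n + 1)⟩, ?_⟩
  rintro ⟨rfl, rfl⟩
  rfl

namespace NBW

variable {L Q Q' : Type*}

theorem mem_lang_withInit {N : NBW L Q} {q : Q} {α : ℕ → L} :
    α ∈ (N.withInit q).lang ↔ ∃ r, N.IsRunFrom q α r ∧ N.Accepting r :=
  Iff.rfl

theorem accepting_wcons_iff {N : NBW L Q} {q : Q} {r : ℕ → Q} :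
    N.Accepting (wcons q r) ↔ N.Accepting r := by
  refine exists_congr fun p => and_congr_right fun _ => ⟨fun h n => ?_, fun h n => ?_⟩
  · obtain ⟨m, hnm, hm⟩ := h (n + 1)
    obtain ⟨k, rfl⟩ : ∃ k, m = k + 1 := ⟨m - 1, by omega⟩
    exact ⟨k, by omega, hm⟩
  · obtain ⟨m, hnm, hm⟩ := h n
    exact ⟨m + 1, by omega, hm⟩

theorem wcons_mem_lang_withInit_iff {N : NBW L Q} {q : Q} {σ : L} {α : ℕ → L} :
    wcons σ α ∈ (N.withInit q).lang ↔ ∃ p ∈ N.step q σ, α ∈ (N.withInit p).lang := by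
  simp only [mem_lang_withInit]
  constructor
  · rintro ⟨r, ⟨hr0, hr⟩, hacc⟩
    rw [← wcons_zero_succ r, accepting_wcons_iff] at hacc
    exact ⟨r 1, hr0 ▸ hr 0, fun n => r (n + 1), ⟨rfl, fun n => hr (n + 1)⟩, hacc⟩
  · rintro ⟨p, hp, r, ⟨rfl, hr⟩, hacc⟩
    refine ⟨wcons q r, ⟨rfl, ?_⟩, accepting_wcons_iff.2 hacc⟩
    rintro (_ | n)
    exacts [hp, hr n]

/-- `e` identifies `N'` with a sub-automaton of `N` that is closed under transitions. -/
structure IsEmbedding (e : Q' → Q) (N' : NBW L Q') (N : NBW L Q) : Prop where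
  injective : Function.Injective e
  step_eq : ∀ q σ, N.step (e q) σ = e '' N'.step q σ
  preimage_acc : e ⁻¹' N.acc = N'.acc

namespace IsEmbedding

variable {e : Q' → Q} {N' : NBW L Q'} {N : NBW L Q}

theorem accepting_comp_iff (he : IsEmbedding e N' N) {r : ℕ → Q'} :
    N.Accepting (e ∘ r) ↔ N'.Accepting r := by
  constructor
  · rintro ⟨p, hp, h⟩
    obtain ⟨m, -, hm⟩ := h 0
    subst hm
    refine ⟨r m, (Set.ext_iff.1 he.preimage_acc _).1 hp, fun n => ?_⟩
    obtain ⟨k, hnk, hk⟩ := h n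
    exact ⟨k, hnk, he.injective hk⟩
  · rintro ⟨p, hp, h⟩
    refine ⟨e p, (Set.ext_iff.1 he.preimage_acc _).2 hp, fun n => ?_⟩
    obtain ⟨k, hnk, hk⟩ := h n
    exact ⟨k, hnk, congrArg e hk⟩

theorem isRunFrom_comp_iff (he : IsEmbedding e N' N) {q : Q'} {α : ℕ → L} {r : ℕ → Q'} :
    N.IsRunFrom (e q) α (e ∘ r) ↔ N'.IsRunFrom q α r := by
  simp only [IsRunFrom, Function.comp_apply, he.step_eq, he.injective.mem_set_image,
    he.injective.eq_iff]

theorem exists_eq_comp_of_isRunFrom (he : IsEmbedding e N' N) {q : Q'} {α : ℕ → L}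
    {r : ℕ → Q} (hr : N.IsRunFrom (e q) α r) : ∃ r' : ℕ → Q', r = e ∘ r' := by
  have hrange : ∀ n, r n ∈ Set.range e := by
    intro n
    induction n with
    | zero => exact ⟨q, hr.1.symm⟩
    | succ n ih =>
      obtain ⟨p, hp⟩ := ih
      have hstep := hr.2 n
      rw [← hp, he.step_eq] at hstep
      exact Set.image_subset_range _ _ hstep
  choose r' hr' using hrange
  exact ⟨r', funext fun n => (hr' n).symm⟩

theorem lang_withInit (he : IsEmbedding e N' N) (q : Q') :
    (N.withInit (e q)).lang = (N'.withInit q).lang := by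
  ext α
  simp only [mem_lang_withInit]
  constructor
  · rintro ⟨r, hr, hacc⟩
    obtain ⟨r', rfl⟩ := he.exists_eq_comp_of_isRunFrom hr
    exact ⟨r', he.isRunFrom_comp_iff.1 hr, he.accepting_comp_iff.1 hacc⟩
  · rintro ⟨r', hr', hacc⟩
    exact ⟨e ∘ r', he.isRunFrom_comp_iff.2 hr', he.accepting_comp_iff.2 hacc⟩

end IsEmbedding

end NBW

/-- The states `q₀' = some ()` and `f' = none` of `B_f` as states of `fork(A_f)`. -/
def ForkState.ofB {Q : Type*} : Option Unit → ForkState Q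
  | some _ => .b0
  | none => .bf

section Fork

variable {Γ Q : Type*}

theorem isEmbedding_af (A : NFAo Γ Q) : NBW.IsEmbedding ForkState.af A.dollar (fork A) where
  injective _ _ h := ForkState.af.inj h
  step_eq _ _ := rfl
  preimage_acc := by ext q; simp [fork, NFAo.dollar]

theorem isEmbedding_ofB (A : NFAo Γ Q) :
    NBW.IsEmbedding ForkState.ofB (unitNFA Γ).dollar (fork A) where
  injective := by rintro (_ | _) (_ | _) h <;> first | rfl | cases h
  step_eq := by
    rintro (_ | _) (_ | _) <;>
      simp [ForkState.ofB, fork, forkStep, NFAo.dollar, NFAo.dollarStep,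
        NFAo.dollarStepAux, unitNFA]
  preimage_acc := by ext (_ | _) <;> simp [ForkState.ofB, fork, NFAo.dollar]

theorem wcons_wcons_mem_fork_lang_iff (A : NFAo Γ Q) (σ σ' : Option Γ) (w : ℕ → Option Γ) :
    wcons σ (wcons σ' w) ∈ (fork A).lang ↔
      w ∈ A.dollar.lang ∨ σ' = none ∧ w ∈ (unitNFA Γ).dollar.lang := by
  have hA : ((fork A).withInit (.af (some A.init))).lang = A.dollar.lang :=
    (isEmbedding_af A).lang_withInit (some A.init)
  have hB : ((fork A).withInit .b0).lang = (unitNFA Γ).dollar.lang :=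
    (isEmbedding_ofB A).lang_withInit (some ())
  change _ ∈ ((fork A).withInit .qF).lang ↔ _
  simp only [NBW.wcons_mem_lang_withInit_iff]
  simp only [fork] at hA hB ⊢
  cases σ' <;> simp [forkStep, hA, hB]

end Fork

theorem fork_lang_general {Γ Q : Type}
    (A : NFAo Γ Q) :
    (fork A).lang =
      {β : ℕ → Option Γ | ∃ (σ σ' : Option Γ) (w : ℕ → Option Γ),
          w ∈ A.dollar.lang ∧ β = wcons σ (wcons σ' w)} ∪
      {β : ℕ → Option Γ | ∃ (σ : Option Γ) (w : ℕ → Option Γ),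
          w ∈ (unitNFA Γ).dollar.lang ∧ β = wcons σ (wcons none w)} := by
  ext β
  obtain ⟨σ, σ', w, rfl⟩ : ∃ σ σ' w, β = wcons σ (wcons σ' w) :=
    ⟨β 0, β 1, fun n => β (n + 2), funext fun n => by
      rcases n with _ | _ | n <;> rfl⟩
  simp only [Set.mem_union, Set.mem_ofPred_eq, wcons_inj, wcons_wcons_mem_fork_lang_iff]
  simp [and_comm]

/-- For every complete NFA `A`,
`L(fork(A_f)) = {σσ'w : σ,σ' ∈ Σ_$, w ∈ L(A_f)} ∪ {σ$w : σ ∈ Σ_$, w ∈ L(B_f)}`. -/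
theorem fork_lang {Γ Q : Type} [Fintype Γ] [Fintype Q]
    (A : NFAo Γ Q) (hA : A.Complete) :
    (fork A).lang =
      {β : ℕ → Option Γ | ∃ (σ σ' : Option Γ) (w : ℕ → Option Γ),
          w ∈ A.dollar.lang ∧ β = wcons σ (wcons σ' w)} ∪
      {β : ℕ → Option Γ | ∃ (σ : Option Γ) (w : ℕ → Option Γ),
          w ∈ (unitNFA Γ).dollar.lang ∧ β = wcons σ (wcons none w)} :=
  fork_lang_general A
end

section
/- For every finite MDP M, every initial state s₀, and every complete NBW N over the labelling alphabet of M, PSyn_N^M(s₀) ≤ PSem_N^M(s₀). -/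
open scoped Classical ENNReal

/-!
A strategy `μ` of `M × N` is simulated on `M` by its marginal: after a path `l`, in state `t`,
play `a` with the conditional probability under `μ` that a lift of `l` to `M × N` continues with
a lift of `(t, a)`. By induction on `l`, the total weight of the lifts of `l` is at most the
weight of `l` under the marginal, so a set of runs of `M × N` defined through their projection to
`M` is at most as likely as its projection under the marginal. Almost every run of `M × N` takes
only steps of positive probability; along such a run the automaton component is a run of `N` on
the labels, and if it visits `F` infinitely often then, `Q` being finite, some accepting state
recurs, so the label sequence is in `L(N)`.
-/

open MeasureTheory

theorem prefList_succ {X : Type*} (r : ℕ → X) (n : ℕ) :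
    prefList r (n + 1) = prefList r n ++ [r n] := by
  rw [prefList, List.ofFn_succ', List.concat_eq_append]
  rfl

theorem prefList_comp {X Y : Type*} (f : X → Y) (r : ℕ → X) (n : ℕ) :
    prefList (f ∘ r) n = (prefList r n).map f := by
  simp [prefList, List.map_ofFn, Function.comp_def]

theorem NBW.accepting_of_frequently_mem_acc {L Q : Type*} [Finite Q] (N : NBW L Q)
    {ρ : ℕ → Q} (h : ∀ n, ∃ m, n ≤ m ∧ ρ m ∈ N.acc) : N.Accepting ρ := by
  have hfreq : ∃ᶠ m in Filter.atTop, ∃ q, q ∈ N.acc ∧ ρ m = q :=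
    Filter.frequently_atTop.2 fun n => (h n).imp fun m hm => ⟨hm.1, _, hm.2, rfl⟩
  obtain ⟨q, hq⟩ := Filter.frequently_exists.1 hfreq
  rw [Filter.frequently_and_distrib_left] at hq
  exact ⟨q, hq.1, Filter.frequently_atTop.1 hq.2⟩

namespace MDP

theorem IsCylinderAt.preimage_comp {X Y : Type*} {G : Set (ℕ → Y)} {n : ℕ}
    (hG : IsCylinderAt G n) (f : X → Y) : IsCylinderAt ((f ∘ ·) ⁻¹' G) n := by
  intro r r' h hr
  exact hG _ _ (by rw [prefList_comp, prefList_comp, h]) hr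

section PathWeight

variable {S A L : Type*} (M : MDP S A L)

noncomputable def transProb (x : S × A) (t : S) : ℝ≥0∞ :=
  match M.prob x.1 x.2 with
  | none => 0
  | some p => p t

/-- The probability that the path `l` from `s` continues in state `t`; for `l = []` this is
whether the run starts in `t`. -/
noncomputable def nextProb (s : S) (l : List (S × A)) (t : S) : ℝ≥0∞ :=
  match l.getLast? with
  | none => if t = s then 1 else 0
  | some x => M.transProb x t

theorem transProb_le_one (x : S × A) (t : S) : M.transProb x t ≤ 1 := by
  unfold transProb
  split
  · exact zero_le_one
  · exact PMF.coe_le_one _ _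

theorem nextProb_le_one (s : S) (l : List (S × A)) (t : S) : M.nextProb s l t ≤ 1 := by
  unfold nextProb
  split
  · split <;> simp
  · exact M.transProb_le_one _ t

theorem nextProb_append_singleton (s : S) (l : List (S × A)) (x : S × A) (t : S) :
    M.nextProb s (l ++ [x]) t = M.transProb x t := by
  simp [nextProb]

variable (μ : M.Strategy)

theorem pathWeightAux_cons_cons (hist : List (S × A)) (s s' s'' : S) (a b : A)
    (rest : List (S × A)) :
    M.pathWeightAux μ hist s ((s', a) :: (s'', b) :: rest) =
      if s' = s then
        μ.act hist s a *
          (M.transProb (s, a) s'' * M.pathWeightAux μ (hist ++ [(s, a)]) s'' ((s'', b) :: rest))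
      else 0 := rfl

theorem pathWeightAux_append_singleton :
    ∀ (l hist : List (S × A)) (s t : S) (b : A),
      M.pathWeightAux μ hist s (l ++ [(t, b)]) =
        M.pathWeightAux μ hist s l * M.nextProb s l t * μ.act (hist ++ l) t b
  | [], hist, s, t, b => by
    by_cases h : t = s
    · subst h
      simp [nextProb, pathWeightAux]
    · simp [nextProb, pathWeightAux, h]
  | [(s₁, a₁)], hist, s, t, b => by
    by_cases h : s₁ = s
    · subst h
      simp only [List.cons_append, List.nil_append, pathWeightAux_cons_cons, if_pos,
        pathWeightAux, mul_one, nextProb, List.getLast?_singleton]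
      ring
    · simp [pathWeightAux_cons_cons, pathWeightAux, h]
  | (s₁, a₁) :: (s₂, a₂) :: l, hist, s, t, b => by
    by_cases h : s₁ = s
    · subst h
      have ih :=
        pathWeightAux_append_singleton ((s₂, a₂) :: l) (hist ++ [(s₁, a₁)]) s₂ t b
      simp only [List.cons_append] at ih ⊢
      rw [pathWeightAux_cons_cons, pathWeightAux_cons_cons, ih]
      simp [nextProb, List.getLast?_cons, mul_assoc]
    · simp [pathWeightAux_cons_cons, h]

theorem pathWeightAux_le_one (hist : List (S × A)) (s : S) (l : List (S × A)) :
    M.pathWeightAux μ hist s l ≤ 1 := by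
  induction l using List.reverseRecOn with
  | nil => exact le_rfl
  | append_singleton l x ih =>
    rw [pathWeightAux_append_singleton]
    exact mul_le_one' (mul_le_one' ih (M.nextProb_le_one _ _ _)) (PMF.coe_le_one _ _)

theorem enabled_of_pathWeightAux_append_ne_zero (hM : M.NonBlocking) {hist l : List (S × A)}
    {s t : S} {b : A} (h : M.pathWeightAux μ hist s (l ++ [(t, b)]) ≠ 0) : M.enabled t b := by
  rw [pathWeightAux_append_singleton] at h
  exact μ.supp _ t (hM t) b ((PMF.mem_support_iff _ _).2 (right_ne_zero_of_mul h))

variable [Fintype S] [Fintype A]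

theorem pr_eq_zero_of_isCylinderAt {s₀ : S} {E : Set (ℕ → S × A)} {n : ℕ}
    (hE : IsCylinderAt E n) (h : ∀ r ∈ E, M.pathWeightAux μ [] s₀ (prefList r n) = 0) :
    M.Pr μ s₀ E = 0 := by
  refine le_antisymm ?_ zero_le
  calc M.Pr μ s₀ E ≤ M.preMeasure μ s₀ E := OuterMeasure.ofFunction_le _
    _ ≤ M.horizonProb μ s₀ n E := iInf₂_le n hE
    _ = 0 := Finset.sum_eq_zero fun v _ => by
      split_ifs with hv
      · obtain ⟨r, hr, hrv⟩ := hv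
        rw [← hrv]
        exact h r hr
      · rfl

theorem pr_exists_nextProb_eq_zero (s₀ : S) :
    M.Pr μ s₀ {r | ∃ n, M.nextProb s₀ (prefList r n) (r n).1 = 0} = 0 := by
  rw [Set.ofPred_exists]
  refine measure_iUnion_null fun n => M.pr_eq_zero_of_isCylinderAt μ (n := n + 1) ?_ ?_
  · intro r r' h hr
    rw [prefList_succ, prefList_succ] at h
    obtain ⟨hpre, hlast⟩ := List.append_inj' h rfl
    simp only [List.cons.injEq, and_true] at hlast
    simpa [← hpre, ← hlast] using hr
  · intro r (hr : M.nextProb s₀ (prefList r n) (r n).1 = 0)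
    rw [prefList_succ, pathWeightAux_append_singleton, hr, mul_zero, zero_mul]

end PathWeight

section Decoration

variable {S A L S' A' L' Z : Type*} [Fintype S] [Fintype A] [Fintype S'] [Fintype A'] [Fintype Z]
  (M : MDP S A L) (μ : M.Strategy) (s₀ : S) (M' : MDP S' A' L') (μ' : M'.Strategy) (s₀' : S')
  (e : S' × A' ≃ (S × A) × Z)

theorem horizonProb_preimage_le_of_decoration {n : ℕ}
    (hdec : ∀ v : Fin n → S × A,
      ∑ w : Fin n → Z, M'.pathWeightAux μ' [] s₀' (List.ofFn fun i => e.symm (v i, w i)) ≤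
        M.pathWeightAux μ [] s₀ (List.ofFn v))
    (G : Set (ℕ → S × A)) :
    M'.horizonProb μ' s₀' n (((fun x => (e x).1) ∘ ·) ⁻¹' G) ≤
      M.horizonProb μ s₀ n G := by
  let split : (Fin n → S' × A') ≃ (Fin n → S × A) × (Fin n → Z) :=
    (Equiv.arrowCongr (Equiv.refl _) e).trans (Equiv.arrowProdEquivProdArrow _ _ _)
  rw [horizonProb, ← split.symm.sum_comp, Fintype.sum_prod_type]
  refine Finset.sum_le_sum fun v _ => ?_
  have hbase : ∀ w : Fin n → Z,
      (List.ofFn fun i => e.symm (v i, w i)).map (fun x => (e x).1) = List.ofFn v := by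
    intro w
    simp [List.map_ofFn, Function.comp_def]
  split_ifs with hv
  · refine le_trans (Finset.sum_le_sum fun w _ => ?_) (hdec v)
    split_ifs
    · exact le_rfl
    · exact zero_le
  · refine le_of_eq (Finset.sum_eq_zero fun w _ => if_neg ?_)
    rintro ⟨r, hr, hrw⟩
    exact hv ⟨_, hr, by rw [prefList_comp, hrw]; exact hbase w⟩

theorem pr_preimage_le_of_decoration
    (hdec : ∀ (n : ℕ) (v : Fin n → S × A),
      ∑ w : Fin n → Z, M'.pathWeightAux μ' [] s₀' (List.ofFn fun i => e.symm (v i, w i)) ≤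
        M.pathWeightAux μ [] s₀ (List.ofFn v))
    (G : Set (ℕ → S × A)) :
    M'.Pr μ' s₀' (((fun x => (e x).1) ∘ ·) ⁻¹' G) ≤ M.Pr μ s₀ G := by
  suffices OuterMeasure.map ((fun x => (e x).1) ∘ ·) (M'.Pr μ' s₀') ≤ M.Pr μ s₀ from
    this G
  refine OuterMeasure.le_ofFunction.2 fun H => ?_
  rw [OuterMeasure.map_apply]
  refine (OuterMeasure.ofFunction_le _).trans ?_
  refine le_iInf₂ fun n hH => (iInf₂_le n (hH.preimage_comp _)).trans ?_
  exact horizonProb_preimage_le_of_decoration M μ s₀ M' μ' s₀' e (hdec n) H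

end Decoration

section Product

variable {S A L Q : Type*} (M : MDP S A L) (N : NBW L Q)

theorem prod_transProb (x : (S × Q) × (A × Q)) (t : S) (q : Q) :
    (M.prod N).transProb x (t, q) =
      if x.2.2 ∈ N.step x.1.2 (M.label x.1.1) ∧ q = x.2.2 then M.transProb (x.1.1, x.2.1) t
      else 0 := by
  unfold transProb prod
  by_cases hs : x.2.2 ∈ N.step x.1.2 (M.label x.1.1)
  · cases hp : M.prob x.1.1 x.2.1 with
    | none => simp [hs, hp]
    | some p => by_cases hq : q = x.2.2 <;> simp [hs, hp, hq, PMF.map_apply]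
  · simp [hs]

theorem prod_nonBlocking (hM : M.NonBlocking) (hN : N.Complete) : (M.prod N).NonBlocking := by
  rintro ⟨t, q⟩
  obtain ⟨a, ha⟩ := hM t
  obtain ⟨q', hq'⟩ := hN q (M.label t)
  exact ⟨(a, q'), by simpa [enabled, prod, hq'] using ha⟩

theorem enabled_of_prod_enabled {t : S} {q q' : Q} {a : A}
    (h : (M.prod N).enabled (t, q) (a, q')) : M.enabled t a := by
  by_cases hs : q' ∈ N.step q (M.label t)
  · simpa [enabled, prod, hs] using h
  · simp [enabled, prod, hs] at h

theorem sum_prod_nextProb_le [Fintype Q] (s : S) (q₀ : Q) (d : List ((S × Q) × (A × Q)))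
    (t : S) :
    ∑ q, (M.prod N).nextProb (s, q₀) d (t, q) ≤
      M.nextProb s (d.map fun x => (x.1.1, x.2.1)) t := by
  unfold nextProb
  rw [List.getLast?_map]
  cases d.getLast? with
  | none => by_cases ht : t = s <;> simp [ht]
  | some x =>
    simp only [prod_transProb, ite_and]
    split_ifs <;> simp

theorem isRunFrom_of_prod_nextProb_ne_zero {s₀ : S} {r : ℕ → (S × Q) × (A × Q)}
    (h : ∀ n, (M.prod N).nextProb (s₀, N.init) (prefList r n) (r n).1 ≠ 0) :
    N.IsRunFrom N.init (fun n => M.label (r n).1.1) (fun n => (r n).1.2) := by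
  refine ⟨?_, fun i => ?_⟩
  · have h0 := h 0
    unfold nextProb at h0
    simp only [prefList, List.ofFn_zero, List.getLast?_nil] at h0
    split_ifs at h0 with hstart
    · exact congrArg Prod.snd hstart
    · exact absurd rfl h0
  · have hi := h (i + 1)
    rw [prefList_succ, nextProb_append_singleton, prod_transProb] at hi
    obtain ⟨hstep, hnext⟩ := (ite_ne_right_iff.1 hi).1
    show (r (i + 1)).1.2 ∈ N.step (r i).1.2 (M.label (r i).1.1)
    rwa [hnext]

theorem prod_label_mem_lang [Finite Q] {s₀ : S} {r : ℕ → (S × Q) × (A × Q)}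
    (hpath : ∀ n, (M.prod N).nextProb (s₀, N.init) (prefList r n) (r n).1 ≠ 0)
    (hacc : ∀ n, ∃ m, n ≤ m ∧ (r m).1.2 ∈ N.acc) :
    (fun n => M.label (r n).1.1) ∈ N.lang :=
  ⟨_, M.isRunFrom_of_prod_nextProb_ne_zero N hpath, N.accepting_of_frequently_mem_acc hacc⟩

variable [Fintype Q] {M N} (μ : (M.prod N).Strategy) (s₀ : S)

/-- The probability under `μ` that a run of `M × N` from `(s₀, q₀)` projects to `l` on its
first `l.length` steps. -/
noncomputable def liftWeight (l : List (S × A)) : ℝ≥0∞ :=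
  ∑ w : Fin l.length → Q × Q, (M.prod N).pathWeightAux μ [] (s₀, N.init)
    (List.ofFn fun i => Equiv.prodProdProdComm S A Q Q (l.get i, w i))

theorem liftWeight_ofFn {n : ℕ} (v : Fin n → S × A) :
    liftWeight μ s₀ (List.ofFn v) = ∑ w : Fin n → Q × Q, (M.prod N).pathWeightAux μ []
      (s₀, N.init) (List.ofFn fun i => Equiv.prodProdProdComm S A Q Q (v i, w i)) := by
  refine Fintype.sum_equiv ((finCongr List.length_ofFn).arrowCongr (Equiv.refl _)) _ _
    fun w => ?_
  rw [List.ofFn_congr List.length_ofFn]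
  simp [Equiv.arrowCongr_apply]

theorem liftWeight_append_singleton (l : List (S × A)) (x : S × A) :
    liftWeight μ s₀ (l ++ [x]) = ∑ w : Fin l.length → Q × Q, ∑ y : Q × Q,
      (M.prod N).pathWeightAux μ [] (s₀, N.init)
        ((List.ofFn fun i => Equiv.prodProdProdComm S A Q Q (l.get i, w i)) ++
          [((x.1, y.1), (x.2, y.2))]) := by
  have hsnoc : l ++ [x] = List.ofFn (Fin.snoc l.get x) := by
    rw [List.ofFn_succ', List.concat_eq_append]
    simp
  rw [hsnoc, liftWeight_ofFn, ← (Fin.snocEquiv _).sum_comp, Fintype.sum_prod_type,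
    Finset.sum_comm]
  refine Finset.sum_congr rfl fun w _ => Finset.sum_congr rfl fun y _ => ?_
  rw [List.ofFn_succ', List.concat_eq_append]
  simp [Fin.snocEquiv]

theorem liftWeight_ne_top (l : List (S × A)) : liftWeight μ s₀ l ≠ ⊤ :=
  ENNReal.sum_ne_top.2 fun _ _ =>
    ((pathWeightAux_le_one _ _ _ _ _).trans_lt ENNReal.one_lt_top).ne

theorem enabled_of_liftWeight_append_ne_zero (hM : M.NonBlocking) (hN : N.Complete)
    {l : List (S × A)} {t : S} {a : A} (h : liftWeight μ s₀ (l ++ [(t, a)]) ≠ 0) :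
    M.enabled t a := by
  rw [liftWeight_append_singleton] at h
  obtain ⟨w, -, hw⟩ := Finset.exists_ne_zero_of_sum_ne_zero h
  obtain ⟨y, -, hy⟩ := Finset.exists_ne_zero_of_sum_ne_zero hw
  exact M.enabled_of_prod_enabled N
    ((M.prod N).enabled_of_pathWeightAux_append_ne_zero μ (M.prod_nonBlocking N hM hN) hy)

variable [Fintype A]

theorem sum_liftWeight_append_le (l : List (S × A)) (t : S) :
    ∑ a, liftWeight μ s₀ (l ++ [(t, a)]) ≤ liftWeight μ s₀ l * M.nextProb s₀ l t := by
  simp only [liftWeight_append_singleton, pathWeightAux_append_singleton, List.nil_append]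
  rw [Finset.sum_comm, liftWeight, Finset.sum_mul]
  refine Finset.sum_le_sum fun w _ => ?_
  set d := List.ofFn fun i => Equiv.prodProdProdComm S A Q Q (l.get i, w i)
  have hbase : d.map (fun x => (x.1.1, x.2.1)) = l := by
    simp [d, List.map_ofFn, Function.comp_def, Equiv.prodProdProdComm]
  calc ∑ a, ∑ y : Q × Q, (M.prod N).pathWeightAux μ [] (s₀, N.init) d *
          (M.prod N).nextProb (s₀, N.init) d (t, y.1) * μ.act d (t, y.1) (a, y.2)
      = (M.prod N).pathWeightAux μ [] (s₀, N.init) d *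
          ∑ q, (M.prod N).nextProb (s₀, N.init) d (t, q) := by
        rw [Finset.sum_comm, Fintype.sum_prod_type, Finset.mul_sum]
        refine Finset.sum_congr rfl fun q _ => ?_
        have hone : ∑ z, μ.act d (t, q) z = 1 := by
          rw [← (μ.act d (t, q)).tsum_coe, tsum_fintype]
        simp_rw [← Finset.mul_sum]
        rw [← Fintype.sum_prod_type_right, hone, mul_one]
    _ ≤ (M.prod N).pathWeightAux μ [] (s₀, N.init) d * M.nextProb s₀ l t := by
        gcongr
        exact hbase ▸ M.sum_prod_nextProb_le N s₀ N.init d t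

noncomputable def Strategy.marginal (hM : M.NonBlocking) (hN : N.Complete) : M.Strategy where
  act l t :=
    if h : ∑ b, liftWeight μ s₀ (l ++ [(t, b)]) = 0 then PMF.pure (hM t).choose
    else PMF.normalize (fun a => liftWeight μ s₀ (l ++ [(t, a)])) (by rwa [tsum_fintype])
      (by rw [tsum_fintype]; exact ENNReal.sum_ne_top.2 fun _ _ => liftWeight_ne_top μ s₀ _)
  supp l t _ a ha := by
    split_ifs at ha with h
    · rw [PMF.support_pure, Set.mem_singleton_iff] at ha
      exact ha ▸ (hM t).choose_spec
    · rw [PMF.support_normalize] at ha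
      exact enabled_of_liftWeight_append_ne_zero μ s₀ hM hN ha

theorem Strategy.marginal_act_mul_sum (hM : M.NonBlocking) (hN : N.Complete)
    (l : List (S × A)) (t : S) (a : A) :
    (μ.marginal s₀ hM hN).act l t a * ∑ b, liftWeight μ s₀ (l ++ [(t, b)]) =
      liftWeight μ s₀ (l ++ [(t, a)]) := by
  by_cases h : ∑ b, liftWeight μ s₀ (l ++ [(t, b)]) = 0
  · have ha : liftWeight μ s₀ (l ++ [(t, a)]) = 0 := by
      refine le_antisymm (h ▸ ?_) zero_le
      exact Finset.single_le_sum (f := fun b => liftWeight μ s₀ (l ++ [(t, b)]))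
        (fun _ _ => zero_le) (Finset.mem_univ a)
    rw [h, ha, mul_zero]
  · simp only [Strategy.marginal, dif_neg h, PMF.normalize_apply, tsum_fintype]
    rw [mul_assoc, ENNReal.inv_mul_cancel h
      (ENNReal.sum_ne_top.2 fun _ _ => liftWeight_ne_top μ s₀ _), mul_one]

theorem liftWeight_le_pathWeightAux_marginal (hM : M.NonBlocking) (hN : N.Complete)
    (l : List (S × A)) :
    liftWeight μ s₀ l ≤ M.pathWeightAux (μ.marginal s₀ hM hN) [] s₀ l := by
  induction l using List.reverseRecOn with
  | nil => simp [liftWeight, pathWeightAux]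
  | append_singleton l x ih =>
    obtain ⟨t, a⟩ := x
    set act := (μ.marginal s₀ hM hN).act l t a
    calc liftWeight μ s₀ (l ++ [(t, a)])
        = act * ∑ b, liftWeight μ s₀ (l ++ [(t, b)]) :=
          (μ.marginal_act_mul_sum s₀ hM hN l t a).symm
      _ ≤ act * (liftWeight μ s₀ l * M.nextProb s₀ l t) := by
        gcongr
        exact sum_liftWeight_append_le μ s₀ l t
      _ ≤ act * (M.pathWeightAux (μ.marginal s₀ hM hN) [] s₀ l * M.nextProb s₀ l t) := by
        gcongr
      _ = M.pathWeightAux (μ.marginal s₀ hM hN) [] s₀ (l ++ [(t, a)]) := by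
        rw [pathWeightAux_append_singleton, List.nil_append]
        ring

end Product

end MDP

theorem psyn_le_psem_general {S A L Q : Type} [Fintype S] [Fintype A] [Fintype Q]
    (M : MDP S A L) (hM : M.NonBlocking) (N : NBW L Q) (hN : N.Complete) (s₀ : S) :
    PSyn N M s₀ ≤ PSem N M s₀ := by
  refine iSup_le fun μ => le_iSup_of_le (μ.marginal s₀ hM hN) ?_
  let accepted := {r : ℕ → S × A | (fun n => M.label (r n).1) ∈ N.lang}
  let lifted := ((fun x => (Equiv.prodProdProdComm S Q A Q x).1) ∘ ·) ⁻¹' accepted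
  let stuck := {r | ∃ n, (M.prod N).nextProb (s₀, N.init) (prefList r n) (r n).1 = 0}
  have hsub : {r | ∀ n, ∃ m, n ≤ m ∧ (r m).1.2 ∈ N.acc} ⊆ lifted ∪ stuck := by
    intro r hacc
    by_cases hpath : ∀ n, (M.prod N).nextProb (s₀, N.init) (prefList r n) (r n).1 ≠ 0
    · exact Or.inl (M.prod_label_mem_lang N hpath hacc)
    · push Not at hpath
      exact Or.inr hpath
  calc (M.prod N).Pr μ (s₀, N.init) {r | ∀ n, ∃ m, n ≤ m ∧ (r m).1.2 ∈ N.acc}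
      ≤ (M.prod N).Pr μ (s₀, N.init) lifted + (M.prod N).Pr μ (s₀, N.init) stuck :=
        (measure_mono hsub).trans (measure_union_le _ _)
    _ = (M.prod N).Pr μ (s₀, N.init) lifted := by
        rw [(M.prod N).pr_exists_nextProb_eq_zero, add_zero]
    _ ≤ M.Pr (μ.marginal s₀ hM hN) s₀ accepted :=
        MDP.pr_preimage_le_of_decoration M _ s₀ (M.prod N) μ _ _
          (fun n v => (MDP.liftWeight_ofFn μ s₀ v).symm.le.trans
            (MDP.liftWeight_le_pathWeightAux_marginal μ s₀ hM hN _)) accepted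

/-- For every finite MDP, initial state and complete NBW over the
labelling alphabet, `PSyn ≤ PSem`. -/
theorem psyn_le_psem {S A L Q : Type} [Fintype S] [Fintype A] [Fintype L] [Fintype Q]
    (M : MDP S A L) (hM : M.NonBlocking) (N : NBW L Q) (hN : N.Complete) (s₀ : S) :
    PSyn N M s₀ ≤ PSem N M s₀ :=
  psyn_le_psem_general M hM N hN s₀
end
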